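/- arXiv:math/9802003 — 4 statements merged into one kernel-verified Lean document; each statement's English description precedes it below -/
import Mathlib

section
/- Let a group H act properly discontinuously by homeomorphisms on a locally compact connected topological space X such that the quotient X/H is compact. Then H is finitely generated. -/
open Pointwise

/-- If a group `H` acts by homeomorphisms, properly discontinuously (every compact set meets
only finitely many of its translates) and cocompactly (the translates of some compact set
cover), on a locally compact connected space `X`, then `H` is finitely generated. -/
theorem statement0 {H X : Type*} [Group H] [TopologicalSpace X]
    [LocallyCompactSpace X] [ConnectedSpace X]
    [MulAction H X] (hcont : ∀ h : H, Continuous fun x : X => h • x)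
    (hpd : ∀ C : Set X, IsCompact C → {h : H | ((h • C) ∩ C).Nonempty}.Finite)
    (hcocpt : ∃ C : Set X, IsCompact C ∧ ⋃ h : H, h • C = Set.univ) :
    Group.FG H := by
  obtain ⟨C, hC, hcov⟩ := hcocpt
  -- choose compact neighborhoods of each point
  choose f hfc hfn using fun x : X => exists_compact_mem_nhds x
  have hsub : C ⊆ ⋃ x ∈ C, interior (f x) := fun x hx =>
    Set.mem_biUnion hx (mem_interior_iff_mem_nhds.mpr (hfn x))
  obtain ⟨t, htC, htfin, htcov⟩ := hC.elim_finite_subcover_image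
    (fun x _ => isOpen_interior) hsub
  set K : Set X := ⋃ x ∈ t, f x with hKdef
  have hK : IsCompact K := htfin.isCompact_biUnion (fun x _ => hfc x)
  have hCint : C ⊆ interior K := by
    intro x hx
    obtain ⟨y, hy, hxy⟩ := Set.mem_iUnion₂.mp (htcov hx)
    exact interior_mono (Set.subset_biUnion_of_mem hy) hxy
  -- the generating set
  set S : Set H := {h : H | ((h • K) ∩ K).Nonempty} with hSdef
  have hSfin : S.Finite := hpd K hK
  -- smul by a group element is a homeomorphism; images of open sets are open
  have hopen : ∀ (h : H) (U : Set X), IsOpen U → IsOpen (h • U) := by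
    intro h U hU
    have : h • U = (fun x : X => h⁻¹ • x) ⁻¹' U := by
      ext x
      simp [Set.mem_smul_set_iff_inv_smul_mem, Set.mem_preimage]
    rw [this]
    exact hU.preimage (hcont h⁻¹)
  set G : Subgroup H := Subgroup.closure S with hGdef
  -- the two open sets
  set U : Set X := ⋃ h ∈ (G : Set H), h • interior K with hUdef
  set V : Set X := ⋃ h ∈ ((G : Set H))ᶜ, h • interior K with hVdef
  have hUopen : IsOpen U := isOpen_biUnion fun h _ => hopen h _ isOpen_interior
  have hVopen : IsOpen V := isOpen_biUnion fun h _ => hopen h _ isOpen_interior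
  -- x0 : a point of interior K
  have hXne : Nonempty X := inferInstance
  obtain ⟨z⟩ := hXne
  have hz : z ∈ ⋃ h : H, h • C := by rw [hcov]; trivial
  obtain ⟨h0, hh0⟩ := Set.mem_iUnion.mp hz
  obtain ⟨c0, hc0, hc0z⟩ := hh0
  have hx0 : c0 ∈ interior K := hCint hc0
  -- cover : U ∪ V = univ
  have hcover : U ∪ V = Set.univ := by
    apply Set.eq_univ_of_forall
    intro x
    have hx : x ∈ ⋃ h : H, h • C := by rw [hcov]; trivial
    obtain ⟨h, hh⟩ := Set.mem_iUnion.mp hx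
    obtain ⟨c, hc, hcx⟩ := hh
    have hxint : x ∈ h • interior K := ⟨c, hCint hc, hcx⟩
    by_cases hG : h ∈ G
    · exact Or.inl (Set.mem_biUnion hG hxint)
    · exact Or.inr (Set.mem_biUnion hG hxint)
  -- disjointness
  have hdisj : U ∩ V = ∅ := by
    by_contra hne
    obtain ⟨x, hxU, hxV⟩ := Set.nonempty_iff_ne_empty.mpr hne
    obtain ⟨g, hg, hxg⟩ := Set.mem_iUnion₂.mp hxU
    obtain ⟨g', hg', hxg'⟩ := Set.mem_iUnion₂.mp hxV
    -- g⁻¹ * g' ∈ S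
    have hmem : g⁻¹ * g' ∈ S := by
      refine ⟨g⁻¹ • x, ?_, ?_⟩
      · obtain ⟨y, hy, hyx⟩ := hxg'
        refine ⟨y, interior_subset hy, ?_⟩
        simp only [← hyx]
        simp [mul_smul]
      · obtain ⟨y, hy, hyx⟩ := hxg
        rw [← hyx, inv_smul_smul]
        exact interior_subset hy
    have : g⁻¹ * g' ∈ G := Subgroup.subset_closure hmem
    exact hg' (by simpa using mul_mem hg this)
  -- U nonempty
  have hUne : U.Nonempty := ⟨c0, Set.mem_biUnion (one_mem G) (by
    rw [one_smul]; exact hx0)⟩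
  -- V is clopen, hence empty
  have hVcomp : Vᶜ = U := by
    ext x
    constructor
    · intro hx
      rcases (Set.eq_univ_iff_forall.mp hcover x) with h | h
      · exact h
      · exact absurd h hx
    · intro hx hxV
      have : x ∈ U ∩ V := ⟨hx, hxV⟩
      rw [hdisj] at this
      exact this
  have hVclosed : IsClosed V := by
    rw [← isOpen_compl_iff, hVcomp]; exact hUopen
  have hVempty : V = ∅ := by
    rcases isClopen_iff.mp ⟨hVclosed, hVopen⟩ with h | h
    · exact h
    · exfalso
      obtain ⟨x, hxU⟩ := hUne
      have hxV : x ∈ V := by rw [h]; trivial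
      have : x ∈ U ∩ V := ⟨hxU, hxV⟩
      rw [hdisj] at this
      exact this
  -- every h ∈ G
  have htop : G = ⊤ := by
    rw [Subgroup.eq_top_iff']
    intro h
    have hxU : h • c0 ∈ U := by
      rcases (Set.eq_univ_iff_forall.mp hcover (h • c0)) with hh | hh
      · exact hh
      · rw [hVempty] at hh; exact absurd hh (Set.notMem_empty _)
    obtain ⟨g, hg, hxg⟩ := Set.mem_iUnion₂.mp hxU
    have hmem : g⁻¹ * h ∈ S := by
      refine ⟨(g⁻¹ * h) • c0, ⟨c0, interior_subset hx0, rfl⟩, ?_⟩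
      obtain ⟨y, hy, hyx⟩ := hxg
      rw [mul_smul, ← hyx, inv_smul_smul]
      exact interior_subset hy
    have : g⁻¹ * h ∈ G := Subgroup.subset_closure hmem
    simpa using mul_mem hg this
  exact Group.fg_iff.mpr ⟨S, by rw [← hGdef, htop], hSfin⟩
end

section
/- Let G be a topological group and X a G-space admitting local cross-sections at every point. Then any continuous G-equivariant map π : Y → X from a G-space Y to X is a locally trivial fibration: each point x₀ ∈ X has a neighborhood U and a homeomorphism U × π⁻¹(x₀) → π⁻¹(U) given by (u, z) ↦ χ(u)·z, where χ is a local cross-section at x₀ with χ(x₀) = 1. -/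
/-!
The map `(u, z) ↦ χ u • z` lands in `π⁻¹(U)` because `π (χ u • z) = χ u • x₀ = u`, and its
inverse is `y ↦ (π y, (χ (π y))⁻¹ • y)`; both are continuous since `χ`, inversion, the action
on `Y` and `π` are. Multiplying a given cross-section on the right by `(χ x₀)⁻¹`, which fixes
`x₀`, normalizes it so that `χ x₀ = 1`.
-/

open Set

section CrossSection

variable {G X Y : Type*} [Group G] [MulAction G X] [MulAction G Y]

theorem exists_crossSection_apply_eq_one [TopologicalSpace G] [ContinuousMul G]
    [TopologicalSpace X] {x₀ : X} {U : Set X} (hx₀ : x₀ ∈ U) {χ₀ : X → G}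
    (hχ₀c : ContinuousOn χ₀ U) (hχ₀ : ∀ u ∈ U, χ₀ u • x₀ = u) :
    ∃ χ : X → G, ContinuousOn χ U ∧ χ x₀ = 1 ∧ ∀ u ∈ U, χ u • x₀ = u := by
  have hfix : (χ₀ x₀)⁻¹ • x₀ = x₀ := inv_smul_eq_iff.2 (hχ₀ x₀ hx₀).symm
  refine ⟨fun u => χ₀ u * (χ₀ x₀)⁻¹, hχ₀c.mul continuousOn_const, mul_inv_cancel _, ?_⟩
  intro u hu
  rw [mul_smul, hfix, hχ₀ u hu]

variable {π : Y → X} {x₀ : X} {U : Set X} {χ : X → G}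

theorem apply_crossSection_smul (hπequiv : ∀ (g : G) (y : Y), π (g • y) = g • π y)
    (hχ : ∀ u ∈ U, χ u • x₀ = u) {u : X} (hu : u ∈ U) {z : Y} (hz : π z = x₀) :
    π (χ u • z) = u := by
  rw [hπequiv, hz, hχ u hu]

theorem apply_inv_crossSection_smul (hπequiv : ∀ (g : G) (y : Y), π (g • y) = g • π y)
    (hχ : ∀ u ∈ U, χ u • x₀ = u) {y : Y} (hy : π y ∈ U) :
    π ((χ (π y))⁻¹ • y) = x₀ := by
  rw [hπequiv, inv_smul_eq_iff, hχ _ hy]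

def crossSectionEquiv (hπequiv : ∀ (g : G) (y : Y), π (g • y) = g • π y)
    (hχ : ∀ u ∈ U, χ u • x₀ = u) :
    U × (π ⁻¹' {x₀}) ≃ π ⁻¹' U where
  toFun p := ⟨χ p.1 • (p.2 : Y),
    mem_preimage.2 ((apply_crossSection_smul hπequiv hχ p.1.2 p.2.2).symm ▸ p.1.2)⟩
  invFun y :=
    (⟨π y, y.2⟩, ⟨(χ (π y))⁻¹ • (y : Y), apply_inv_crossSection_smul hπequiv hχ y.2⟩)
  left_inv := by
    rintro ⟨⟨u, hu⟩, ⟨z, hz⟩⟩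
    have hπu : π (χ u • z) = u := apply_crossSection_smul hπequiv hχ hu hz
    ext
    · exact hπu
    · simp only [hπu, inv_smul_smul]
  right_inv := by
    rintro ⟨y, hy⟩
    ext
    exact smul_inv_smul _ y

variable [TopologicalSpace G] [ContinuousInv G] [TopologicalSpace X] [TopologicalSpace Y]
  [ContinuousSMul G Y]

def crossSectionHomeomorph (hπequiv : ∀ (g : G) (y : Y), π (g • y) = g • π y)
    (hχ : ∀ u ∈ U, χ u • x₀ = u) (hπ : Continuous π) (hχc : ContinuousOn χ U) :
    U × (π ⁻¹' {x₀}) ≃ₜ π ⁻¹' U where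
  toEquiv := crossSectionEquiv hπequiv hχ
  continuous_toFun := by
    have hχU : Continuous (U.domRestrict χ) := continuousOn_iff_continuous_domRestrict.mp hχc
    exact ((hχU.comp continuous_fst).smul
      (continuous_subtype_val.comp continuous_snd)).subtype_mk _
  continuous_invFun := by
    have hχU : Continuous (U.domRestrict χ) := continuousOn_iff_continuous_domRestrict.mp hχc
    have hbase : Continuous fun y : π ⁻¹' U => (⟨π y, y.2⟩ : U) :=
      (hπ.comp continuous_subtype_val).subtype_mk _
    exact hbase.prodMk (((hχU.comp hbase).inv.smul continuous_subtype_val).subtype_mk _)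

theorem apply_crossSectionHomeomorph_apply
    (hπequiv : ∀ (g : G) (y : Y), π (g • y) = g • π y) (hχ : ∀ u ∈ U, χ u • x₀ = u)
    (hπ : Continuous π) (hχc : ContinuousOn χ U) (p : U × (π ⁻¹' {x₀})) :
    π (crossSectionHomeomorph hπequiv hχ hπ hχc p) = p.1 :=
  apply_crossSection_smul hπequiv hχ p.1.2 p.2.2

end CrossSection

theorem statement2_general {G X Y : Type*} [Group G] [TopologicalSpace G] [IsTopologicalGroup G]
    [TopologicalSpace X] [MulAction G X]
    [TopologicalSpace Y] [MulAction G Y] [ContinuousSMul G Y]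
    (hsec : ∀ x₀ : X, ∃ U ∈ nhds x₀, ∃ χ : X → G,
      ContinuousOn χ U ∧ ∀ u ∈ U, χ u • x₀ = u)
    (π : Y → X) (hπcont : Continuous π) (hπequiv : ∀ (g : G) (y : Y), π (g • y) = g • π y) :
    ∀ x₀ : X, ∃ U ∈ nhds x₀, ∃ χ : X → G,
      ContinuousOn χ U ∧ χ x₀ = 1 ∧ (∀ u ∈ U, χ u • x₀ = u) ∧
      ∃ e : (U × (π ⁻¹' {x₀})) ≃ₜ (π ⁻¹' U),
        ∀ p : U × (π ⁻¹' {x₀}),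
          ((e p : Y) = χ (p.1 : X) • (p.2 : Y)) ∧ π (e p : Y) = (p.1 : X) := by
  intro x₀
  obtain ⟨U, hU, χ₀, hχ₀c, hχ₀⟩ := hsec x₀
  obtain ⟨χ, hχc, hχ1, hχ⟩ := exists_crossSection_apply_eq_one (mem_of_mem_nhds hU) hχ₀c hχ₀
  exact ⟨U, hU, χ, hχc, hχ1, hχ, crossSectionHomeomorph hπequiv hχ hπcont hχc,
    fun p => ⟨rfl, apply_crossSectionHomeomorph_apply hπequiv hχ hπcont hχc p⟩⟩

/-- Palais' Proposition (theorem A): if a `G`-space `X` admits local cross-sections at every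
point, then any continuous `G`-equivariant map `π : Y → X` is locally trivial: each `x₀ ∈ X`
has a neighborhood `U` and a cross-section `χ` at `x₀` with `χ x₀ = 1` such that
`(u, z) ↦ χ u • z` is a homeomorphism `U × π⁻¹(x₀) ≃ π⁻¹(U)` commuting with the projection. -/
theorem statement2 {G X Y : Type*} [Group G] [TopologicalSpace G] [IsTopologicalGroup G]
    [TopologicalSpace X] [MulAction G X] [ContinuousSMul G X]
    [TopologicalSpace Y] [MulAction G Y] [ContinuousSMul G Y]
    (hsec : ∀ x₀ : X, ∃ U ∈ nhds x₀, ∃ χ : X → G,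
      ContinuousOn χ U ∧ ∀ u ∈ U, χ u • x₀ = u)
    (π : Y → X) (hπcont : Continuous π) (hπequiv : ∀ (g : G) (y : Y), π (g • y) = g • π y) :
    ∀ x₀ : X, ∃ U ∈ nhds x₀, ∃ χ : X → G,
      ContinuousOn χ U ∧ χ x₀ = 1 ∧ (∀ u ∈ U, χ u • x₀ = u) ∧
      ∃ e : (U × (π ⁻¹' {x₀})) ≃ₜ (π ⁻¹' U),
        ∀ p : U × (π ⁻¹' {x₀}),
          ((e p : Y) = χ (p.1 : X) • (p.2 : Y)) ∧ π (e p : Y) = (p.1 : X) :=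
  statement2_general hsec π hπcont hπequiv
end

section
/- Let M be a compact Riemannian manifold and ε > 0 such that every closed non-nullhomotopic loop in M has length at least 4ε. If f : M → M is a local diffeomorphism with d(f(x), x) < ε for all x ∈ M, then f is injective. -/
/-!
A local homeomorphism of a compact space is a covering map. For each `x`, lift a minimizing path
from `f x` to `x`, starting at `x`; its endpoint `s x` satisfies `f (s x) = x`. For `x` near `x₀`,
the minimizing path from `f x` to `x` and the detour `f x → f x₀ → x₀ → x` form a loop of length
`< 3ε`, hence nullhomotopic, so both lifts end at the same point. Lifting the detour through local
inverses of `f` shows that near `x₀`, `s` is the local inverse of `f` at `s x₀`. So `s` is a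
continuous section of `f`, and `s ∘ f` and `id` are lifts of `f` agreeing at a point of the
connected space `M`, whence `s ∘ f = id`.
-/

open Set unitInterval

section Variation

variable {X : Type*} [PseudoEMetricSpace X] {x y z : X}

theorem eVariationOn_comp_coe_unitInterval (g : ℝ → X) :
    eVariationOn (g ∘ ((↑) : I → ℝ)) univ = eVariationOn g (Icc 0 1) := by
  rw [eVariationOn.comp_eq_of_monotoneOn g Subtype.val (fun _ _ _ _ h => h), image_univ,
    Subtype.range_coe]

namespace Path

theorem eVariationOn_extend (γ : Path x y) :
    eVariationOn γ.extend (Icc 0 1) = eVariationOn γ univ := by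
  rw [← eVariationOn_comp_coe_unitInterval]
  exact congrArg (eVariationOn · univ) (funext γ.extend_extends')

theorem eVariationOn_symm (γ : Path x y) :
    eVariationOn γ.symm univ = eVariationOn γ univ := by
  rw [show ⇑γ.symm = γ ∘ σ from rfl, eVariationOn.comp_eq_of_antitoneOn _ σ
    (fun _ _ _ _ h => symm_le_symm.mpr h), image_univ,
    unitInterval.symm_bijective.surjective.range_eq]

theorem eVariationOn_trans_le (γ : Path x y) (δ : Path y z) :
    eVariationOn (γ.trans δ) univ ≤ eVariationOn γ univ + eVariationOn δ univ := by
  set g : ℝ → X := fun t => if t ≤ 1 / 2 then γ.extend (2 * t) else δ.extend (2 * t - 1)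
  have hsplit := eVariationOn.Icc_add_Icc g (s := univ) (a := 0) (b := 1 / 2) (c := 1)
    (by norm_num) (by norm_num) (mem_univ _)
  simp only [univ_inter] at hsplit
  have hγ : EqOn g (γ.extend ∘ (2 * ·)) (Icc 0 (1 / 2)) := fun t ht => if_pos ht.2
  have hδ : EqOn g (δ.extend ∘ (2 * · - 1)) (Icc (1 / 2) 1) := by
    intro t ht
    rcases ht.1.eq_or_lt with rfl | hlt
    · norm_num [g]
    · exact if_neg hlt.not_ge
  rw [show ⇑(γ.trans δ) = g ∘ (↑) from rfl, eVariationOn_comp_coe_unitInterval, ← hsplit,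
    ← γ.eVariationOn_extend, ← δ.eVariationOn_extend, eVariationOn.eq_of_eqOn hγ,
    eVariationOn.eq_of_eqOn hδ]
  gcongr <;> refine eVariationOn.comp_le_of_monotoneOn _ _ (fun _ _ _ _ h => by linarith)
    fun t ht => ⟨by linarith [ht.1], by linarith [ht.2]⟩

theorem homotopic_of_eVariationOn_add_lt {L : ENNReal}
    (hloops : ∀ (x : X) (γ : Path x x), ¬ γ.Homotopic (Path.refl x) → L ≤ eVariationOn γ univ)
    (γ δ : Path x y) (h : eVariationOn γ univ + eVariationOn δ univ < L) :
    γ.Homotopic δ := by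
  have hnull : (γ.trans δ.symm).Homotopic (Path.refl x) := by
    by_contra hne
    refine (hloops x _ hne).not_gt (lt_of_le_of_lt ?_ h)
    exact (γ.eVariationOn_trans_le δ.symm).trans_eq (by rw [δ.eVariationOn_symm])
  rw [← Homotopic.Quotient.eq] at hnull ⊢
  rw [Homotopic.Quotient.mk_trans, Homotopic.Quotient.mk_symm, Homotopic.Quotient.mk_refl] at hnull
  calc Homotopic.Quotient.mk γ
      = ((Homotopic.Quotient.mk γ).trans (Homotopic.Quotient.mk δ).symm).trans
          (Homotopic.Quotient.mk δ) := by simp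
    _ = Homotopic.Quotient.mk δ := by rw [hnull, Homotopic.Quotient.refl_trans]

end Path

end Variation

theorem Path.mem_ball_of_eVariationOn_eq {X : Type*} [PseudoMetricSpace X] {x y : X}
    (γ : Path x y) (hγ : eVariationOn γ univ = ENNReal.ofReal (dist x y)) {r : ℝ}
    (hr : dist x y < r) (t : I) : γ t ∈ Metric.ball x r ∩ Metric.ball y r := by
  have hdist (s : I) : dist (γ t) (γ s) ≤ dist x y := by
    rw [← edist_le_ofReal dist_nonneg, ← hγ]
    exact eVariationOn.edist_le _ (mem_univ _) (mem_univ _)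
  exact ⟨by simpa using (hdist 0).trans_lt hr, by simpa using (hdist 1).trans_lt hr⟩

namespace IsCoveringMap

section Lifting

variable {E X : Type*} [TopologicalSpace E] [TopologicalSpace X] {p : E → X}

theorem monodromy_mk_eq_symm (cov : IsCoveringMap p) {e : OpenPartialHomeomorph E X}
    (hpe : p = e) {x y : X} (γ : Path x y) (hγ : ∀ t, γ t ∈ e.target) {ξ : E}
    (hξ : ξ ∈ e.source) (hξx : p ξ = x) :
    (cov.monodromy (.mk γ) ⟨ξ, hξx⟩ : E) = e.symm y := by
  have hlift : (⟨e.symm ∘ γ, e.continuousOn_symm.comp_continuous γ.continuous hγ⟩ : C(_, E)) =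
      cov.liftPath γ ξ (γ.source.trans hξx.symm) := by
    refine (cov.eq_liftPath_iff' _).mpr ⟨funext fun t => ?_, ?_⟩
    · simp [hpe, e.right_inv (hγ t)]
    · simp [← hξx, hpe, e.left_inv hξ]
  show cov.liftPath γ ξ _ 1 = _
  rw [← hlift]
  simp

theorem injective_of_leftInverse [PreconnectedSpace E] (cov : IsCoveringMap p) {s : X → E}
    (hs : Continuous s) (hps : Function.LeftInverse p s) : Function.Injective p := by
  rcases isEmpty_or_nonempty E with _ | ⟨⟨e₀⟩⟩
  · exact fun a => (IsEmpty.false a).elim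
  have : s ∘ p = id := cov.eq_of_comp_eq (hs.comp cov.continuous) continuous_id
    (funext fun e => hps (p e)) (s (p e₀)) (congrArg s (hps (p e₀)))
  exact Function.LeftInverse.injective (congrFun this)

end Lifting

section SectionAlong

variable {X : Type*} [TopologicalSpace X] {p : X → X}

noncomputable def sectionAlong (cov : IsCoveringMap p) (γ : ∀ x, Path (p x) x) (x : X) : X :=
  cov.monodromy (.mk (γ x)) ⟨x, rfl⟩

theorem sectionAlong_spec (cov : IsCoveringMap p) (γ : ∀ x, Path (p x) x) :
    Function.LeftInverse p (cov.sectionAlong γ) :=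
  fun x => (cov.monodromy (.mk (γ x)) ⟨x, rfl⟩).2

theorem sectionAlong_eq_symm (cov : IsCoveringMap p) (γ : ∀ x, Path (p x) x)
    {x₀ x : X} {e₀ e₁ : OpenPartialHomeomorph X X} (he₀ : p = e₀) (he₁ : p = e₁)
    (hx₀ : x₀ ∈ e₀.source) (hx : x ∈ e₀.source) (hs : cov.sectionAlong γ x₀ ∈ e₁.source)
    (w : Path (p x) (p x₀)) (hw : ∀ t, w t ∈ e₀.target)
    (w' : Path x₀ x) (hw' : ∀ t, w' t ∈ e₁.target)
    (hγ : Path.Homotopic.Quotient.mk (γ x) = .mk ((w.trans (γ x₀)).trans w')) :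
    cov.sectionAlong γ x = e₁.symm x := by
  have hw_lift : cov.monodromy (.mk w) ⟨x, rfl⟩ = ⟨x₀, rfl⟩ := by
    ext
    rw [cov.monodromy_mk_eq_symm he₀ w hw hx, he₀, e₀.left_inv hx₀]
  rw [sectionAlong, hγ, Path.Homotopic.Quotient.mk_trans, Path.Homotopic.Quotient.mk_trans,
    cov.monodromy_trans_apply, cov.monodromy_trans_apply, hw_lift]
  exact cov.monodromy_mk_eq_symm he₁ w' hw' hs (cov.sectionAlong_spec γ x₀)

end SectionAlong

open Metric ENNReal in
theorem continuousAt_sectionAlong_geodesic {M : Type*} [MetricSpace M] {f : M → M}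
    (cov : IsCoveringMap f) {γ : ∀ p q : M, Path p q}
    (hγ : ∀ p q, eVariationOn (γ p q) univ = ENNReal.ofReal (dist p q)) {ε : ℝ}
    (hloops : ∀ (x : M) (c : Path x x), ¬ c.Homotopic (Path.refl x) →
      ENNReal.ofReal (4 * ε) ≤ eVariationOn c univ)
    (hclose : ∀ x, dist (f x) x < ε) (x₀ : M) :
    ContinuousAt (cov.sectionAlong fun x => γ (f x) x) x₀ := by
  have hε : 0 < ε := dist_nonneg.trans_lt (hclose x₀)
  set s := cov.sectionAlong fun x => γ (f x) x
  obtain ⟨e₀, hx₀, he₀⟩ := cov.isLocalHomeomorph x₀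
  obtain ⟨e₁, hs₀, he₁⟩ := cov.isLocalHomeomorph (s x₀)
  have hx₀₁ : x₀ ∈ e₁.target := by
    have h := e₁.map_source hs₀
    rwa [← he₁, cov.sectionAlong_spec] at h
  obtain ⟨r₀, hr₀, hball₀⟩ := isOpen_iff.mp e₀.open_target (f x₀) (he₀ ▸ e₀.map_source hx₀)
  obtain ⟨r₁, hr₁, hball₁⟩ := isOpen_iff.mp e₁.open_target x₀ hx₀₁
  refine (e₁.continuousAt_symm hx₀₁).congr ?_
  filter_upwards [e₀.open_source.mem_nhds hx₀,
    cov.continuous.continuousAt (ball_mem_nhds (f x₀) (lt_min hr₀ (half_pos hε))),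
    ball_mem_nhds x₀ (lt_min hr₁ (half_pos hε))] with x hx hfx hxx
  rw [mem_preimage, mem_ball, lt_min_iff] at hfx
  rw [mem_ball, lt_min_iff] at hxx
  set w := γ (f x) (f x₀)
  set w' := γ x₀ x
  have hw : ∀ t, w t ∈ e₀.target :=
    fun t => hball₀ (w.mem_ball_of_eVariationOn_eq (hγ _ _) hfx.1 t).2
  have hw' : ∀ t, w' t ∈ e₁.target :=
    fun t => hball₁ (w'.mem_ball_of_eVariationOn_eq (hγ _ _) (dist_comm x x₀ ▸ hxx.1) t).1
  have hshort : eVariationOn (γ (f x) x) univ +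
      eVariationOn ((w.trans (γ (f x₀) x₀)).trans w') univ < ENNReal.ofReal (4 * ε) := calc
    _ ≤ ENNReal.ofReal (dist (f x) x) + (ENNReal.ofReal (dist (f x) (f x₀)) +
          ENNReal.ofReal (dist (f x₀) x₀) + ENNReal.ofReal (dist x₀ x)) := by
      rw [← hγ, ← hγ, ← hγ, ← hγ]
      grw [Path.eVariationOn_trans_le, Path.eVariationOn_trans_le]
    _ = ENNReal.ofReal (dist (f x) x + (dist (f x) (f x₀) + dist (f x₀) x₀ + dist x₀ x)) := by
      rw [ofReal_add, ofReal_add, ofReal_add] <;> positivity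
    _ < ENNReal.ofReal (4 * ε) := by
      rw [ofReal_lt_ofReal_iff (by positivity)]
      linarith [hclose x, hclose x₀, dist_comm x₀ x]
  have hhom : (γ (f x) x).Homotopic ((w.trans (γ (f x₀) x₀)).trans w') :=
    Path.homotopic_of_eVariationOn_add_lt hloops _ _ hshort
  exact (cov.sectionAlong_eq_symm (fun x => γ (f x) x) he₀ he₁ hx₀ hx hs₀ w hw w' hw'
    (Path.Homotopic.Quotient.eq.mpr hhom)).symm

end IsCoveringMap

theorem statement6_general {M : Type*} [MetricSpace M] [CompactSpace M] [ConnectedSpace M]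
    (hgeo : ∀ p q : M, ∃ γ : Path p q, eVariationOn γ Set.univ = ENNReal.ofReal (dist p q))
    (ε : ℝ)
    (hloops : ∀ (x : M) (γ : Path x x), ¬ γ.Homotopic (Path.refl x) →
      ENNReal.ofReal (4 * ε) ≤ eVariationOn γ Set.univ)
    (f : M → M) (hf : IsLocalHomeomorph f) (hclose : ∀ x : M, dist (f x) x < ε) :
    Function.Injective f := by
  have cov : IsCoveringMap f := isLocalHomeomorph_iff_isCoveringMap.mp hf
  choose γ hγ using hgeo
  exact cov.injective_of_leftInverse
    (continuous_iff_continuousAt.mpr (cov.continuousAt_sectionAlong_geodesic hγ hloops hclose))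
    (cov.sectionAlong_spec _)

/-- In a compact connected geodesic metric space `M` (such as a compact Riemannian manifold
with its Riemannian distance, where the length of a path is its total variation), if every
closed non-nullhomotopic loop has length at least `4ε`, then any local homeomorphism
(e.g. a local diffeomorphism) `f : M → M` with `d(f x, x) < ε` for all `x` is injective. -/
theorem statement6 {M : Type*} [MetricSpace M] [CompactSpace M] [ConnectedSpace M]
    (hgeo : ∀ p q : M, ∃ γ : Path p q, eVariationOn γ Set.univ = ENNReal.ofReal (dist p q))
    (ε : ℝ) (hε : 0 < ε)
    (hloops : ∀ (x : M) (γ : Path x x), ¬ γ.Homotopic (Path.refl x) →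
      ENNReal.ofReal (4 * ε) ≤ eVariationOn γ Set.univ)
    (f : M → M) (hf : IsLocalHomeomorph f) (hclose : ∀ x : M, dist (f x) x < ε) :
    Function.Injective f :=
  statement6_general hgeo ε hloops f hf hclose
end

section
/- Let G be a topological group acting continuously on spaces X and Y. If the G-space X admits local cross-sections and π : Y → X is continuous, G-equivariant and surjective, then π is a Serre fibration. -/
open Set Filter Topology

/-! ### Preliminaries -/

noncomputable def st15clamp (x : ℝ) : ℝ := max 0 (min 1 x)

lemma st15clamp_continuous : Continuous st15clamp :=
  continuous_const.max (continuous_const.min continuous_id)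

lemma st15clamp_nonneg (x : ℝ) : 0 ≤ st15clamp x := le_max_left _ _

lemma st15clamp_le_one (x : ℝ) : st15clamp x ≤ 1 :=
  max_le zero_le_one (min_le_left _ _)

lemma st15clamp_of_mem {x : ℝ} (h0 : 0 ≤ x) (h1 : x ≤ 1) : st15clamp x = x := by
  unfold st15clamp; rw [min_eq_right h1, max_eq_right h0]

/-- Pasting lemma for two closed sets. -/
lemma st15glue {α β : Type*} [TopologicalSpace α] [TopologicalSpace β] {s t : Set α}
    (hs : IsClosed s) (ht : IsClosed t) {f g : α → β} (hf : ContinuousOn f s)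
    (hg : ContinuousOn g t) (hfg : ∀ x ∈ s ∩ t, f x = g x) :
    ∃ F : α → β, ContinuousOn F (s ∪ t) ∧ (∀ x ∈ s, F x = f x) ∧ (∀ x ∈ t, F x = g x) := by
  classical
  set F : α → β := fun x => if x ∈ s then f x else g x with hF
  have hFs : ∀ x ∈ s, F x = f x := fun x hx => if_pos hx
  have hFt : ∀ x ∈ t, F x = g x := by
    intro x hx
    by_cases hxs : x ∈ s
    · rw [hF]; simp only [if_pos hxs]; exact hfg x ⟨hxs, hx⟩
    · exact if_neg hxs
  have key : ∀ (u : Set α), IsClosed u → ContinuousOn F u → ∀ x, ContinuousWithinAt F u x := by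
    intro u hu hc x
    by_cases hxu : x ∈ u
    · exact hc x hxu
    · have hb : 𝓝[u] x = ⊥ := by
        by_contra hne
        exact hxu (hu.closure_subset (mem_closure_iff_nhdsWithin_neBot.2 ⟨hne⟩))
      rw [ContinuousWithinAt, hb]
      exact Filter.tendsto_bot
  refine ⟨F, ?_, hFs, hFt⟩
  intro x _
  exact (key s hs (hf.congr hFs) x).union (key t ht (hg.congr hFt) x)

/-! ### Lexicographic order on multi-indices -/

def st15lex {d N : ℕ} (μ ν : Fin d → Fin N) : Prop :=
  ∃ i₀, (∀ j, j < i₀ → μ j = ν j) ∧ μ i₀ < ν i₀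

lemma st15lex_ne {d N : ℕ} {μ ν : Fin d → Fin N} (h : st15lex μ ν) : μ ≠ ν := by
  obtain ⟨i, _, hlt⟩ := h
  intro he; rw [he] at hlt; exact lt_irrefl _ hlt

lemma st15lex_asymm {d N : ℕ} {μ ν : Fin d → Fin N} (h1 : st15lex μ ν) (h2 : st15lex ν μ) :
    False := by
  obtain ⟨i, hi, hilt⟩ := h1
  obtain ⟨k, hk, hklt⟩ := h2
  rcases lt_trichotomy i k with h | h | h
  · rw [hk i h] at hilt; exact lt_irrefl _ hilt
  · subst h; exact lt_irrefl _ (hilt.trans hklt)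
  · rw [hi k h] at hklt; exact lt_irrefl _ hklt

lemma st15lex_trans {d N : ℕ} {μ ν ρ : Fin d → Fin N} (h1 : st15lex μ ν) (h2 : st15lex ν ρ) :
    st15lex μ ρ := by
  obtain ⟨i, hi, hilt⟩ := h1
  obtain ⟨k, hk, hklt⟩ := h2
  rcases lt_trichotomy i k with h | h | h
  · exact ⟨i, fun j hj => (hi j hj).trans (hk j (hj.trans h)), by rw [← hk i h]; exact hilt⟩
  · subst h; exact ⟨i, fun j hj => (hi j hj).trans (hk j hj), hilt.trans hklt⟩
  · exact ⟨k, fun j hj => (hi j (hj.trans h)).trans (hk j hj), by rw [hi k h]; exact hklt⟩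

lemma st15lex_total {d N : ℕ} {μ ν : Fin d → Fin N} (h : μ ≠ ν) :
    st15lex μ ν ∨ st15lex ν μ := by
  have hne : (Finset.univ.filter fun i => μ i ≠ ν i).Nonempty := by
    by_contra h'
    rw [Finset.not_nonempty_iff_eq_empty, Finset.filter_eq_empty_iff] at h'
    exact h (funext fun i => not_not.1 (h' (Finset.mem_univ i)))
  set i₀ := Finset.min' _ hne with hi₀
  have h1 : μ i₀ ≠ ν i₀ := (Finset.mem_filter.1 (Finset.min'_mem _ hne)).2
  have h2 : ∀ j, j < i₀ → μ j = ν j := by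
    intro j hj
    by_contra hc
    exact absurd (Finset.min'_le _ j (by simp [hc])) (not_le.2 hj)
  rcases lt_or_gt_of_ne h1 with h | h
  · exact Or.inl ⟨i₀, h2, h⟩
  · exact Or.inr ⟨i₀, fun j hj => (h2 j hj).symm, h⟩

lemma st15exists_lexMax {d N : ℕ} (T : Finset (Fin d → Fin N)) (hT : T.Nonempty) :
    ∃ μ ∈ T, ∀ ν ∈ T, ν ≠ μ → st15lex ν μ := by
  classical
  induction T using Finset.induction_on with
  | empty => exact absurd hT (by simp)
  | @insert a s ha ih =>
    rcases s.eq_empty_or_nonempty with rfl | hs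
    · refine ⟨a, by simp, ?_⟩
      intro ν hν hne
      simp only [Finset.mem_insert, Finset.notMem_empty, or_false] at hν
      exact absurd hν hne
    · obtain ⟨m, hm, hmax⟩ := ih hs
      have ham : a ≠ m := fun h => ha (h ▸ hm)
      rcases st15lex_total ham with h | h
      · refine ⟨m, Finset.mem_insert_of_mem hm, ?_⟩
        intro ν hν hne
        rcases Finset.mem_insert.1 hν with rfl | hν'
        · exact h
        · exact hmax ν hν' hne
      · refine ⟨a, Finset.mem_insert_self _ _, ?_⟩
        intro ν hν hne
        rcases Finset.mem_insert.1 hν with rfl | hν'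
        · exact absurd rfl hne
        · rcases eq_or_ne ν m with rfl | hνm
          · exact h
          · exact st15lex_trans (hmax ν hν' hνm) h

def st15down {d N : ℕ} (μ : Fin d → Fin N) (i : Fin d) : Fin d → Fin N :=
  Function.update μ i ⟨(μ i : ℕ) - 1, lt_of_le_of_lt (Nat.sub_le _ _) (μ i).isLt⟩

lemma st15down_apply_ne {d N : ℕ} (μ : Fin d → Fin N) {i j : Fin d} (h : j ≠ i) :
    st15down μ i j = μ j := Function.update_of_ne h _ _

lemma st15down_apply_self {d N : ℕ} (μ : Fin d → Fin N) (i : Fin d) :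
    (st15down μ i i : ℕ) = (μ i : ℕ) - 1 := by
  simp [st15down]

lemma st15lex_down {d N : ℕ} {μ : Fin d → Fin N} {i : Fin d} (h : 1 ≤ (μ i : ℕ)) :
    st15lex (st15down μ i) μ := by
  refine ⟨i, fun j hj => st15down_apply_ne μ (ne_of_lt hj), ?_⟩
  rw [Fin.lt_def, st15down_apply_self]
  omega

lemma st15down_ne {d N : ℕ} {μ : Fin d → Fin N} {i : Fin d} (h : 1 ≤ (μ i : ℕ)) :
    st15down μ i ≠ μ := st15lex_ne (st15lex_down h)

/-! ### Boxes and retraction -/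

def st15Box {d : ℕ} (c : Fin d → ℝ) (ε : ℝ) : Set (Fin d → ℝ) :=
  {p | ∀ i, c i ≤ p i ∧ p i ≤ c i + ε}

lemma st15Box_isClosed {d : ℕ} (c : Fin d → ℝ) (ε : ℝ) : IsClosed (st15Box c ε) := by
  have : st15Box c ε =
      ⋂ i, ({p : Fin d → ℝ | c i ≤ p i} ∩ {p | p i ≤ c i + ε}) := by
    ext p; simp [st15Box, forall_and]
  rw [this]
  exact isClosed_iInter fun i =>
    (isClosed_le continuous_const (continuous_apply i)).inter
      (isClosed_le (continuous_apply i) continuous_const)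

noncomputable def st15u {d : ℕ} (c : Fin d → ℝ) (ε : ℝ) (p : Fin d → ℝ) (i : Fin d) : ℝ :=
  st15clamp ((p i - c i) / ε)

noncomputable def st15s {d : ℕ} (S : Finset (Fin d)) (hS : S.Nonempty) (c : Fin d → ℝ)
    (ε : ℝ) (p : Fin d → ℝ) : ℝ :=
  S.inf' hS fun i => 2 / (2 - st15u c ε p i)

noncomputable def st15r {d : ℕ} (S : Finset (Fin d)) (hS : S.Nonempty) (c : Fin d → ℝ)
    (ε : ℝ) (p : Fin d → ℝ) : Fin d → ℝ :=
  fun j => c j + ε * (if j ∈ S then 2 - st15s S hS c ε p * (2 - st15u c ε p j)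
    else st15u c ε p j)

lemma st15u_mem {d : ℕ} (c : Fin d → ℝ) (ε : ℝ) (p : Fin d → ℝ) (i : Fin d) :
    0 ≤ st15u c ε p i ∧ st15u c ε p i ≤ 1 :=
  ⟨st15clamp_nonneg _, st15clamp_le_one _⟩

lemma st15u_box {d : ℕ} {c : Fin d → ℝ} {ε : ℝ} (hε : 0 < ε) {p : Fin d → ℝ}
    (hp : p ∈ st15Box c ε) (i : Fin d) : st15u c ε p i = (p i - c i) / ε := by
  have h := hp i
  exact st15clamp_of_mem (div_nonneg (by linarith [h.1]) hε.le)
    ((div_le_one hε).2 (by linarith [h.2]))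

lemma st15s_ge_one {d : ℕ} (S : Finset (Fin d)) (hS : S.Nonempty) (c : Fin d → ℝ)
    (ε : ℝ) (p : Fin d → ℝ) : 1 ≤ st15s S hS c ε p := by
  apply Finset.le_inf'
  intro i _
  have h := st15u_mem c ε p i
  rw [le_div_iff₀ (by linarith [h.2])]
  linarith [h.1]

lemma st15s_le {d : ℕ} (S : Finset (Fin d)) (hS : S.Nonempty) (c : Fin d → ℝ)
    (ε : ℝ) (p : Fin d → ℝ) {i : Fin d} (hi : i ∈ S) :
    st15s S hS c ε p ≤ 2 / (2 - st15u c ε p i) :=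
  Finset.inf'_le _ hi

lemma st15r_continuous {d : ℕ} (S : Finset (Fin d)) (hS : S.Nonempty) (c : Fin d → ℝ)
    (ε : ℝ) : Continuous (st15r S hS c ε) := by
  have hu : ∀ i, Continuous fun p => st15u c ε p i := fun i =>
    st15clamp_continuous.comp (by fun_prop : Continuous fun p : Fin d → ℝ => (p i - c i) / ε)
  have hune : ∀ (p : Fin d → ℝ) (i : Fin d), 2 - st15u c ε p i ≠ 0 := fun p i => by
    have h := st15u_mem c ε p i; intro h0; linarith [h.2]
  have hscont : Continuous fun p => st15s S hS c ε p := by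
    apply Continuous.finset_inf'_apply hS
    intro i _
    exact continuous_const.div (continuous_const.sub (hu i)) (fun p => hune p i)
  apply continuous_pi
  intro j
  by_cases hj : j ∈ S
  · simp only [st15r, hj, if_true]
    exact continuous_const.add (continuous_const.mul
      (continuous_const.sub (hscont.mul (continuous_const.sub (hu j)))))
  · simp only [st15r, hj, if_false]
    exact continuous_const.add (continuous_const.mul (hu j))

lemma st15r_mem {d : ℕ} (S : Finset (Fin d)) (hS : S.Nonempty) (c : Fin d → ℝ)
    {ε : ℝ} (hε : 0 < ε) {p : Fin d → ℝ} (hp : p ∈ st15Box c ε) :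
    st15r S hS c ε p ∈ st15Box c ε ∧ ∃ i ∈ S, st15r S hS c ε p i = c i := by
  have hs1 := st15s_ge_one S hS c ε p
  constructor
  · intro j
    by_cases hj : j ∈ S
    · have hu := st15u_mem c ε p j
      have h2pos : (0:ℝ) < 2 - st15u c ε p j := by linarith [hu.2]
      have hle : st15s S hS c ε p * (2 - st15u c ε p j) ≤ 2 :=
        (le_div_iff₀ h2pos).1 (st15s_le S hS c ε p hj)
      have hge : 1 ≤ st15s S hS c ε p * (2 - st15u c ε p j) := by nlinarith [hu.2]
      have hv0 : 0 ≤ 2 - st15s S hS c ε p * (2 - st15u c ε p j) := by linarith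
      have hv1 : 2 - st15s S hS c ε p * (2 - st15u c ε p j) ≤ 1 := by linarith
      simp only [st15r, hj, if_true]
      constructor
      · nlinarith
      · nlinarith
    · have h := hp j
      have : ε * st15u c ε p j = p j - c j := by
        rw [st15u_box hε hp j]; field_simp
      simp only [st15r, hj, if_false, this]
      exact ⟨by linarith [h.1], by linarith [h.2]⟩
  · obtain ⟨i, hiS, hieq⟩ := Finset.exists_mem_eq_inf' hS (fun i => 2 / (2 - st15u c ε p i))
    refine ⟨i, hiS, ?_⟩
    have hu := st15u_mem c ε p i
    have hne : 2 - st15u c ε p i ≠ 0 := by intro h0; linarith [hu.2]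
    have hcancel : (2 / (2 - st15u c ε p i)) * (2 - st15u c ε p i) = 2 :=
      div_mul_cancel₀ _ hne
    simp only [st15r, hiS, if_true]
    rw [show st15s S hS c ε p = 2 / (2 - st15u c ε p i) from hieq]
    rw [hcancel]
    ring

lemma st15r_fixed {d : ℕ} (S : Finset (Fin d)) (hS : S.Nonempty) (c : Fin d → ℝ)
    {ε : ℝ} (hε : 0 < ε) {p : Fin d → ℝ} (hp : p ∈ st15Box c ε) {i₀ : Fin d}
    (hi₀ : i₀ ∈ S) (hpi : p i₀ = c i₀) : st15r S hS c ε p = p := by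
  have hu0 : st15u c ε p i₀ = 0 := by
    rw [st15u_box hε hp i₀, hpi]; simp
  have hs1 : st15s S hS c ε p = 1 := by
    refine le_antisymm ?_ (st15s_ge_one S hS c ε p)
    have := st15s_le S hS c ε p hi₀
    rw [hu0] at this
    norm_num at this
    exact this
  funext j
  have hεu : ε * st15u c ε p j = p j - c j := by
    rw [st15u_box hε hp j]; field_simp
  by_cases hj : j ∈ S
  · simp only [st15r, hj, if_true, hs1, one_mul]
    rw [show (2:ℝ) - (2 - st15u c ε p j) = st15u c ε p j by ring, hεu]
    ring
  · simp only [st15r, hj, if_false, hεu]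
    ring

/-! ### Extension of a lift over one box via a cross-section -/

lemma st15extend {G X Y E : Type*} [Group G] [TopologicalSpace G] [IsTopologicalGroup G]
    [TopologicalSpace X] [MulAction G X] [ContinuousSMul G X]
    [TopologicalSpace Y] [MulAction G Y] [ContinuousSMul G Y] [TopologicalSpace E]
    (π : Y → X) (hπequiv : ∀ (g : G) (y : Y), π (g • y) = g • π y)
    {U : Set X} {χ : X → G} {x₀ : X} (hχ : ContinuousOn χ U)
    (hsecU : ∀ u ∈ U, χ u • x₀ = u)
    {A B : Set E} (hAB : A ⊆ B) {r : E → E} (hr : Continuous r)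
    (hrB : ∀ p ∈ B, r p ∈ A) (hrA : ∀ p ∈ A, r p = p)
    {H : E → X} (hH : Continuous H) (hHU : ∀ p ∈ B, H p ∈ U)
    {g : E → Y} (hg : ContinuousOn g A) (hgl : ∀ p ∈ A, π (g p) = H p) :
    ∃ Gx : E → Y, ContinuousOn Gx B ∧ (∀ p ∈ A, Gx p = g p) ∧ (∀ p ∈ B, π (Gx p) = H p) := by
  have hHr : ∀ p ∈ B, H (r p) ∈ U := fun p hp => hHU _ (hAB (hrB p hp))
  refine ⟨fun p => (χ (H p) * (χ (H (r p)))⁻¹) • g (r p), ?_, ?_, ?_⟩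
  · have c1 : ContinuousOn (fun p => χ (H p)) B :=
      hχ.comp hH.continuousOn (fun p hp => hHU p hp)
    have c2 : ContinuousOn (fun p => χ (H (r p))) B :=
      hχ.comp (hH.comp hr).continuousOn hHr
    have c3 : ContinuousOn (fun p => g (r p)) B :=
      hg.comp hr.continuousOn (fun p hp => hrB p hp)
    exact (c1.mul c2.inv).smul c3
  · intro p hp
    show (χ (H p) * (χ (H (r p)))⁻¹) • g (r p) = g p
    rw [hrA p hp, mul_inv_cancel, one_smul]
  · intro p hp
    have h1 : π (g (r p)) = H (r p) := hgl _ (hrB p hp)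
    have h2 : χ (H (r p)) • x₀ = H (r p) := hsecU _ (hHr p hp)
    have h3 : χ (H p) • x₀ = H p := hsecU _ (hHU p hp)
    calc π ((χ (H p) * (χ (H (r p)))⁻¹) • g (r p))
        = (χ (H p) * (χ (H (r p)))⁻¹) • π (g (r p)) := hπequiv _ _
      _ = (χ (H p) * (χ (H (r p)))⁻¹) • (χ (H (r p)) • x₀) := by rw [h1, h2]
      _ = χ (H p) • x₀ := by rw [smul_smul, mul_assoc, inv_mul_cancel, mul_one]
      _ = H p := h3

/-! ### The grid -/

def st15gbox (d N : ℕ) (μ : Fin d → Fin N) : Set (Fin d → ℝ) :=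
  {p | ∀ i, (μ i : ℝ) / N ≤ p i ∧ p i ≤ ((μ i : ℝ) + 1) / N}

lemma st15gbox_eq_Box {d N : ℕ} (hN : 0 < N) (μ : Fin d → Fin N) :
    st15gbox d N μ = st15Box (fun i => (μ i : ℝ) / N) (1 / N) := by
  ext p
  have hN' : (0:ℝ) < N := by exact_mod_cast hN
  constructor <;> intro h i <;> have hi := h i <;>
    constructor <;> [skip; skip; skip; skip]
  · exact hi.1
  · calc p i ≤ ((μ i : ℝ) + 1) / N := hi.2
      _ = (μ i : ℝ) / N + 1 / N := by ring
  · exact hi.1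
  · calc p i ≤ (μ i : ℝ) / N + 1 / N := hi.2
      _ = ((μ i : ℝ) + 1) / N := by ring

lemma st15gbox_isClosed (d N : ℕ) (μ : Fin d → Fin N) : IsClosed (st15gbox d N μ) := by
  have : st15gbox d N μ =
      ⋂ i, ({p : Fin d → ℝ | (μ i : ℝ) / N ≤ p i} ∩ {p | p i ≤ ((μ i : ℝ) + 1) / N}) := by
    ext p; simp [st15gbox, forall_and]
  rw [this]
  exact isClosed_iInter fun i =>
    (isClosed_le continuous_const (continuous_apply i)).inter
      (isClosed_le (continuous_apply i) continuous_const)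

def st15cube (d : ℕ) : Set (Fin d → ℝ) := {p | ∀ i, 0 ≤ p i ∧ p i ≤ 1}

lemma st15gbox_subset_cube {d N : ℕ} (hN : 0 < N) (μ : Fin d → Fin N) :
    st15gbox d N μ ⊆ st15cube d := by
  intro p hp i
  have hN' : (0:ℝ) < N := by exact_mod_cast hN
  have h := hp i
  have h1 : (0:ℝ) ≤ (μ i : ℝ) / N := div_nonneg (Nat.cast_nonneg _) hN'.le
  have h2 : ((μ i : ℝ) + 1) / N ≤ 1 := by
    rw [div_le_one hN']
    have : ((μ i : ℕ) : ℝ) + 1 ≤ (N : ℝ) := by exact_mod_cast (μ i).isLt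
    exact this
  exact ⟨le_trans h1 h.1, le_trans h.2 h2⟩

lemma st15cube_subset_union {d N : ℕ} (hN : 0 < N) {p : Fin d → ℝ} (hp : p ∈ st15cube d) :
    ∃ μ : Fin d → Fin N, p ∈ st15gbox d N μ := by
  have hN' : (0:ℝ) < N := by exact_mod_cast hN
  refine ⟨fun i => ⟨min ⌊p i * N⌋₊ (N - 1), by
    have := Nat.min_le_right ⌊p i * N⌋₊ (N - 1); omega⟩, fun i => ?_⟩
  show ((min ⌊p i * (N:ℝ)⌋₊ (N - 1) : ℕ) : ℝ) / N ≤ p i ∧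
    p i ≤ (((min ⌊p i * (N:ℝ)⌋₊ (N - 1) : ℕ) : ℝ) + 1) / N
  have hpi := hp i
  set k : ℕ := min ⌊p i * (N:ℝ)⌋₊ (N - 1) with hk
  have hfl : (k : ℝ) ≤ p i * N := by
    calc (k : ℝ) ≤ (⌊p i * N⌋₊ : ℝ) := by exact_mod_cast Nat.min_le_left _ _
      _ ≤ p i * N := Nat.floor_le (mul_nonneg hpi.1 hN'.le)
  constructor
  · rw [div_le_iff₀ hN']
    exact hfl
  · rcases le_or_gt ⌊p i * N⌋₊ (N - 1) with h | h
    · have hkfl : k = ⌊p i * N⌋₊ := min_eq_left h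
      rw [le_div_iff₀ hN']
      have := Nat.lt_floor_add_one (p i * N)
      rw [hkfl]
      push_cast
      linarith
    · have hkN : k = N - 1 := min_eq_right h.le
      have : ((k : ℝ) + 1) = (N : ℝ) := by
        rw [hkN]
        have : (1:ℕ) ≤ N := hN
        push_cast [Nat.cast_sub this]
        ring
      rw [this, le_div_iff₀ hN']
      nlinarith [hpi.2]

/-! ### The inductive construction of a lift over the cube -/

def st15region (d N : ℕ) (T : Finset (Fin (d+1) → Fin N)) : Set (Fin (d+1) → ℝ) :=
  {p | p 0 = 0} ∪ ⋃ μ ∈ T, st15gbox (d+1) N μ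

lemma st15region_isClosed (d N : ℕ) (T : Finset (Fin (d+1) → Fin N)) :
    IsClosed (st15region d N T) :=
  (isClosed_eq (continuous_apply 0) continuous_const).union
    (isClosed_biUnion_finset fun μ _ => st15gbox_isClosed _ _ μ)

lemma st15region_insert {d N : ℕ} (μ : Fin (d+1) → Fin N) (T : Finset (Fin (d+1) → Fin N)) :
    st15region d N (insert μ T) = st15region d N T ∪ st15gbox (d+1) N μ := by
  ext p
  simp only [st15region, mem_union, mem_setOf_eq, mem_iUnion, exists_prop,
    Finset.mem_insert]
  constructor
  · rintro (h | ⟨ν, (rfl | hν), hp⟩)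
    · exact Or.inl (Or.inl h)
    · exact Or.inr hp
    · exact Or.inl (Or.inr ⟨ν, hν, hp⟩)
  · rintro ((h | ⟨ν, hν, hp⟩) | hp)
    · exact Or.inl h
    · exact Or.inr ⟨ν, Or.inr hν, hp⟩
    · exact Or.inr ⟨μ, Or.inl rfl, hp⟩

theorem st15aux {G X Y : Type*} [Group G] [TopologicalSpace G] [IsTopologicalGroup G]
    [TopologicalSpace X] [MulAction G X] [ContinuousSMul G X]
    [TopologicalSpace Y] [MulAction G Y] [ContinuousSMul G Y]
    (π : Y → X) (hπequiv : ∀ (g : G) (y : Y), π (g • y) = g • π y)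
    (d N : ℕ) (hN : 0 < N)
    (H : (Fin (d+1) → ℝ) → X) (hH : Continuous H)
    (f₀ : (Fin (d+1) → ℝ) → Y) (hf₀ : Continuous f₀)
    (hl0 : ∀ p, p 0 = 0 → π (f₀ p) = H p)
    (hsmall : ∀ μ : Fin (d+1) → Fin N, ∃ (U : Set X) (χ : X → G) (x₀ : X),
      ContinuousOn χ U ∧ (∀ u ∈ U, χ u • x₀ = u) ∧ ∀ p ∈ st15gbox (d+1) N μ, H p ∈ U) :
    ∃ g : (Fin (d+1) → ℝ) → Y, ContinuousOn g (st15cube (d+1)) ∧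
      (∀ p, p 0 = 0 → g p = f₀ p) ∧ ∀ p ∈ st15cube (d+1), π (g p) = H p := by
  have hN' : (0:ℝ) < N := by exact_mod_cast hN
  suffices key : ∀ (m : ℕ) (T : Finset (Fin (d+1) → Fin N)), T.card = m →
      (∀ μ ∈ T, ∀ i, st15down μ i ∈ T) →
      ∃ g : (Fin (d+1) → ℝ) → Y, ContinuousOn g (st15region d N T) ∧
        (∀ p, p 0 = 0 → g p = f₀ p) ∧ ∀ p ∈ st15region d N T, π (g p) = H p by
    obtain ⟨g, hgc, hg0, hgl⟩ := key _ Finset.univ rfl (fun μ _ i => Finset.mem_univ _)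
    have hsub : st15cube (d+1) ⊆ st15region d N Finset.univ := by
      intro p hp
      obtain ⟨μ, hμ⟩ := st15cube_subset_union hN hp
      exact Or.inr (mem_biUnion (Finset.mem_univ μ) hμ)
    exact ⟨g, hgc.mono hsub, hg0, fun p hp => hgl p (hsub hp)⟩
  intro m
  induction m with
  | zero =>
    intro T hT _
    rw [Finset.card_eq_zero] at hT
    subst hT
    have hre : st15region d N ∅ = {p : Fin (d+1) → ℝ | p 0 = 0} := by
      simp [st15region]
    refine ⟨f₀, ?_, fun p _ => rfl, ?_⟩
    · rw [hre]; exact hf₀.continuousOn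
    · intro p hp
      rw [hre] at hp
      exact hl0 p hp
  | succ m ih =>
    intro T hT hlow
    have hTne : T.Nonempty := Finset.card_pos.1 (by omega)
    obtain ⟨μ, hμT, hmax⟩ := st15exists_lexMax T hTne
    set T' := T.erase μ with hT'def
    have hcard : T'.card = m := by
      rw [hT'def, Finset.card_erase_of_mem hμT, hT]
      omega
    have hlow' : ∀ ν ∈ T', ∀ i, st15down ν i ∈ T' := by
      intro ν hν i
      have hνT : ν ∈ T := Finset.mem_of_mem_erase hν
      have hd : st15down ν i ∈ T := hlow ν hνT i
      rcases Nat.eq_zero_or_pos (ν i : ℕ) with h0 | h1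
      · have hdd : st15down ν i = ν := by
          unfold st15down
          rw [show (⟨(ν i : ℕ) - 1, lt_of_le_of_lt (Nat.sub_le _ _) (ν i).isLt⟩ : Fin N) = ν i
            from Fin.ext (by simp [h0]), Function.update_eq_self]
        rw [hdd]; exact hν
      · refine Finset.mem_erase.2 ⟨?_, hd⟩
        intro heq
        have hνμ : ν ≠ μ := (Finset.mem_erase.1 hν).1
        exact st15lex_asymm (hmax ν hνT hνμ) (heq ▸ st15lex_down h1)
    obtain ⟨g, hgc, hg0, hgl⟩ := ih T' hcard hlow'
    set c : Fin (d+1) → ℝ := fun i => (μ i : ℝ) / N with hc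
    set S : Finset (Fin (d+1)) := insert 0 (Finset.univ.filter fun i => 1 ≤ (μ i : ℕ))
      with hSdef
    have hS : S.Nonempty := ⟨0, Finset.mem_insert_self _ _⟩
    have hmemS : ∀ i, i ∈ S ↔ (i = 0 ∨ 1 ≤ (μ i : ℕ)) := by
      intro i; simp [hSdef]
    have hBox : st15gbox (d+1) N μ = st15Box c (1/N) := st15gbox_eq_Box hN μ
    set F : Set (Fin (d+1) → ℝ) :=
      {p | p ∈ st15gbox (d+1) N μ ∧ ∃ i ∈ S, p i = c i} with hFdef
    have hdownmem : ∀ (i : Fin (d+1)), 1 ≤ (μ i : ℕ) →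
        ∀ p ∈ st15gbox (d+1) N μ, p i = c i → p ∈ ⋃ ν ∈ T', st15gbox (d+1) N ν := by
      intro i h1 p hpB hpi
      have hd : st15down μ i ∈ T' :=
        Finset.mem_erase.2 ⟨st15down_ne h1, hlow μ hμT i⟩
      refine mem_biUnion hd ?_
      intro j
      rcases eq_or_ne j i with rfl | hji
      · have hpj : p j = (μ j : ℝ)/N := by rw [hpi]
        have hvj : ((st15down μ j j : ℕ) : ℝ) = ((μ j : ℕ) : ℝ) - 1 := by
          rw [st15down_apply_self, Nat.cast_sub h1, Nat.cast_one]
        rw [hvj, hpj]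
        constructor
        · gcongr
          linarith
        · rw [show ((μ j : ℕ) : ℝ) - 1 + 1 = ((μ j : ℕ) : ℝ) by ring]
      · rw [st15down_apply_ne μ hji]
        exact hpB j
    have claim1 : st15region d N T' ∩ st15gbox (d+1) N μ ⊆ F := by
      rintro p ⟨hpR, hpB⟩
      refine ⟨hpB, ?_⟩
      rcases hpR with hp0 | hpU
      · have hp0' : p 0 = 0 := hp0
        refine ⟨0, (hmemS 0).2 (Or.inl rfl), ?_⟩
        have h1 : (μ 0 : ℝ)/N ≤ p 0 := (hpB 0).1
        have h2 : (0:ℝ) ≤ (μ 0 : ℝ)/N := div_nonneg (Nat.cast_nonneg _) hN'.le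
        have : (μ 0 : ℝ)/N = 0 := le_antisymm (hp0' ▸ h1) h2
        rw [hp0', hc]; exact this.symm
      · simp only [mem_iUnion, exists_prop] at hpU
        obtain ⟨ν, hνT', hpν⟩ := hpU
        have hνμ : ν ≠ μ := (Finset.mem_erase.1 hνT').1
        obtain ⟨i₀, hpre, hlt⟩ := hmax ν (Finset.mem_of_mem_erase hνT') hνμ
        have hltN : (ν i₀ : ℕ) < (μ i₀ : ℕ) := hlt
        have hcast : ((ν i₀ : ℕ) : ℝ) + 1 ≤ ((μ i₀ : ℕ) : ℝ) := by exact_mod_cast hltN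
        have h1 : (μ i₀ : ℝ)/N ≤ p i₀ := (hpB i₀).1
        have h2 : p i₀ ≤ ((ν i₀ : ℝ) + 1)/N := (hpν i₀).2
        have h3 : ((ν i₀ : ℝ) + 1)/N ≤ (μ i₀ : ℝ)/N := (div_le_div_iff_of_pos_right hN').2 hcast
        exact ⟨i₀, (hmemS i₀).2 (Or.inr (by omega)),
          le_antisymm (le_trans h2 h3) h1⟩
    have claim2 : F ⊆ st15region d N T' := by
      rintro p ⟨hpB, i, hiS, hpi⟩
      rcases (hmemS i).1 hiS with rfl | h1
      · rcases Nat.eq_zero_or_pos (μ 0 : ℕ) with h0 | h1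
        · refine Or.inl ?_
          show p 0 = 0
          rw [hpi]
          show (μ 0 : ℝ)/N = 0
          rw [show ((μ 0 : ℕ) : ℝ) = 0 from by exact_mod_cast h0]
          simp
        · exact Or.inr (hdownmem 0 h1 p hpB hpi)
      · exact Or.inr (hdownmem i h1 p hpB hpi)
    obtain ⟨U, χ, x₀, hχ, hsecU, hHU⟩ := hsmall μ
    have hεpos : (0:ℝ) < 1/N := by positivity
    have hFB : F ⊆ st15gbox (d+1) N μ := fun p hp => hp.1
    have hrB : ∀ p ∈ st15gbox (d+1) N μ, st15r S hS c (1/N) p ∈ F := by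
      intro p hp
      rw [hBox] at hp
      obtain ⟨h1, i, hiS, hieq⟩ := st15r_mem S hS c hεpos hp
      exact ⟨by rw [hBox]; exact h1, i, hiS, hieq⟩
    have hrA : ∀ p ∈ F, st15r S hS c (1/N) p = p := by
      rintro p ⟨hpB, i, hiS, hpi⟩
      exact st15r_fixed S hS c hεpos (by rw [hBox] at hpB; exact hpB) hiS hpi
    obtain ⟨Gx, hGc, hGA, hGl⟩ := st15extend π hπequiv hχ hsecU hFB
      (st15r_continuous S hS c (1/N)) hrB hrA hH hHU (hgc.mono claim2)
      (fun p hp => hgl p (claim2 hp))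
    obtain ⟨Ffin, hFc, hFB', hFt⟩ := st15glue (st15gbox_isClosed (d+1) N μ)
      (st15region_isClosed d N T') hGc hgc
      (fun p hp => hGA p (claim1 ⟨hp.2, hp.1⟩))
    have hreg : st15region d N T = st15gbox (d+1) N μ ∪ st15region d N T' := by
      rw [show T = insert μ T' from (Finset.insert_erase hμT).symm, st15region_insert]
      exact union_comm _ _
    refine ⟨Ffin, ?_, ?_, ?_⟩
    · rw [hreg]; exact hFc
    · intro p hp0
      have hpR : p ∈ st15region d N T' := Or.inl hp0
      rw [hFt p hpR]; exact hg0 p hp0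
    · intro p hp
      rw [hreg] at hp
      rcases hp with hpB | hpR
      · rw [hFB' p hpB]; exact hGl p hpB
      · rw [hFt p hpR]; exact hgl p hpR

/-! ### Main theorem -/

/-- If a `G`-space `X` admits local cross-sections and `π : Y → X` is a continuous
`G`-equivariant surjection, then `π` is a Serre fibration: it has the homotopy lifting
property with respect to all cubes. -/
theorem statement15 {G X Y : Type*} [Group G] [TopologicalSpace G] [IsTopologicalGroup G]
    [TopologicalSpace X] [MulAction G X] [ContinuousSMul G X]
    [TopologicalSpace Y] [MulAction G Y] [ContinuousSMul G Y]
    (hsec : ∀ x₀ : X, ∃ U ∈ nhds x₀, ∃ χ : X → G,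
      ContinuousOn χ U ∧ ∀ u ∈ U, χ u • x₀ = u)
    (π : Y → X) (hπcont : Continuous π) (hπsurj : Function.Surjective π)
    (hπequiv : ∀ (g : G) (y : Y), π (g • y) = g • π y) :
    ∀ (n : ℕ) (f : (Fin n → unitInterval) → Y)
      (Hh : ((Fin n → unitInterval) × unitInterval) → X),
      Continuous f → Continuous Hh → (∀ a, Hh (a, 0) = π (f a)) →
      ∃ Gl : ((Fin n → unitInterval) × unitInterval) → Y,
        Continuous Gl ∧ (∀ a, Gl (a, 0) = f a) ∧ ∀ q, π (Gl q) = Hh q := by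
  intro n f Hh hf hHh hH0
  classical
  choose U hU χ hχ hsecχ using hsec
  set H : (Fin (n+1) → ℝ) → X := fun p =>
    Hh (fun i => Set.projIcc (0:ℝ) 1 zero_le_one (p i.succ),
      Set.projIcc (0:ℝ) 1 zero_le_one (p 0)) with hHdef
  have hHcont : Continuous H := by
    apply hHh.comp
    exact (continuous_pi fun i =>
      continuous_projIcc.comp (continuous_apply (i.succ))).prodMk
      (continuous_projIcc.comp (continuous_apply 0))
  set f₀ : (Fin (n+1) → ℝ) → Y := fun p =>
    f (fun i => Set.projIcc (0:ℝ) 1 zero_le_one (p i.succ)) with hf₀def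
  have hf₀cont : Continuous f₀ :=
    hf.comp (continuous_pi fun i => continuous_projIcc.comp (continuous_apply (i.succ)))
  have hl0 : ∀ p, p 0 = 0 → π (f₀ p) = H p := by
    intro p hp
    have h0 : Set.projIcc (0:ℝ) 1 zero_le_one (p 0) = (0 : unitInterval) := by
      apply Subtype.ext
      simp [Set.projIcc, hp]
    show π (f _) = Hh (_, Set.projIcc (0:ℝ) 1 zero_le_one (p 0))
    rw [h0, hH0]
  have hopen : ∀ x : X, x ∈ interior (U x) := fun x =>
    mem_interior_iff_mem_nhds.2 (hU x)
  have hcube_eq : st15cube (n+1) = Set.Icc (0 : Fin (n+1) → ℝ) 1 := by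
    ext p
    simp [st15cube, Set.mem_Icc, Pi.le_def, forall_and]
  have hcomp : IsCompact (st15cube (n+1)) := by
    rw [hcube_eq]; exact isCompact_Icc
  have hcover : st15cube (n+1) ⊆ ⋃ x : X, H ⁻¹' interior (U x) := by
    intro p _
    exact mem_iUnion.2 ⟨H p, hopen (H p)⟩
  obtain ⟨δ, hδ, hball⟩ := lebesgue_number_lemma_of_metric hcomp
    (fun x => isOpen_interior.preimage hHcont) hcover
  obtain ⟨N0, hN0⟩ := exists_nat_one_div_lt hδ
  set N := N0 + 1 with hNdef
  have hN : 0 < N := Nat.succ_pos _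
  have hN' : (0:ℝ) < N := by exact_mod_cast hN
  have hsmall : ∀ μ : Fin (n+1) → Fin N, ∃ (U' : Set X) (χ' : X → G) (x₀ : X),
      ContinuousOn χ' U' ∧ (∀ u ∈ U', χ' u • x₀ = u) ∧
      ∀ p ∈ st15gbox (n+1) N μ, H p ∈ U' := by
    intro μ
    set cpt : Fin (n+1) → ℝ := fun i => (μ i : ℝ)/N with hcpt
    have hcp : cpt ∈ st15cube (n+1) := by
      intro i
      constructor
      · positivity
      · rw [div_le_one hN']
        exact_mod_cast (μ i).isLt.le
    obtain ⟨x, hx⟩ := hball cpt hcp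
    refine ⟨interior (U x), χ x, x, (hχ x).mono interior_subset,
      fun u hu => hsecχ x u (interior_subset hu), ?_⟩
    intro p hp
    apply hx
    rw [Metric.mem_ball, dist_pi_lt_iff hδ]
    intro i
    have h := hp i
    have hc1 : cpt i = (μ i : ℝ)/N := rfl
    have h1 : |p i - cpt i| ≤ 1/N := by
      rw [abs_le]
      constructor
      · have : cpt i ≤ p i := by rw [hc1]; exact h.1
        have hpos : (0:ℝ) < 1/N := by positivity
        linarith
      · have : p i ≤ cpt i + 1/N := by
          rw [hc1]
          calc p i ≤ ((μ i : ℝ) + 1)/N := h.2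
            _ = (μ i : ℝ)/N + 1/N := by ring
        linarith
    have h2 : (1:ℝ)/N < δ := by
      rw [hNdef]
      push_cast
      exact hN0
    calc dist (p i) (cpt i) = |p i - cpt i| := Real.dist_eq _ _
      _ ≤ 1/N := h1
      _ < δ := h2
  obtain ⟨g, hgc, hg0, hgl⟩ := st15aux π hπequiv n N hN H hHcont f₀ hf₀cont hl0 hsmall
  set emb : ((Fin n → unitInterval) × unitInterval) → (Fin (n+1) → ℝ) :=
    fun q => Fin.cons (q.2 : ℝ) (fun i => (q.1 i : ℝ)) with hembdef
  have hembcont : Continuous emb := by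
    apply continuous_pi
    intro i
    refine Fin.cases ?_ ?_ i
    · simp only [hembdef, Fin.cons_zero]
      exact continuous_subtype_val.comp continuous_snd
    · intro j
      simp only [hembdef, Fin.cons_succ]
      exact continuous_subtype_val.comp ((continuous_apply j).comp continuous_fst)
  have hembcube : ∀ q, emb q ∈ st15cube (n+1) := by
    intro q i
    refine Fin.cases ?_ ?_ i
    · simp only [hembdef, Fin.cons_zero]
      exact ⟨q.2.2.1, q.2.2.2⟩
    · intro j
      simp only [hembdef, Fin.cons_succ]
      exact ⟨(q.1 j).2.1, (q.1 j).2.2⟩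
  have hsuccval : ∀ q (i : Fin n), emb q i.succ = ((q.1 i : ℝ)) := by
    intro q i
    simp [hembdef]
  have hzeroval : ∀ q, emb q 0 = ((q.2 : ℝ)) := by
    intro q
    simp [hembdef]
  refine ⟨fun q => g (emb q), hgc.comp_continuous hembcont hembcube, ?_, ?_⟩
  · intro a
    have h0 : emb (a, 0) 0 = 0 := by
      rw [hzeroval]
      simp
    show g (emb (a, 0)) = f a
    rw [hg0 _ h0]
    show f (fun i => Set.projIcc (0:ℝ) 1 zero_le_one (emb (a,0) i.succ)) = f a
    congr 1
    funext i
    rw [hsuccval, Set.projIcc_of_mem _ (a i).2]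
  · intro q
    show π (g (emb q)) = Hh q
    rw [hgl _ (hembcube q)]
    show Hh (fun i => Set.projIcc (0:ℝ) 1 zero_le_one (emb q i.succ),
      Set.projIcc (0:ℝ) 1 zero_le_one (emb q 0)) = Hh q
    have h1 : (fun i => Set.projIcc (0:ℝ) 1 zero_le_one (emb q i.succ)) = q.1 := by
      funext i
      rw [hsuccval, Set.projIcc_of_mem _ (q.1 i).2]
    have h2 : Set.projIcc (0:ℝ) 1 zero_le_one (emb q 0) = q.2 := by
      rw [hzeroval, Set.projIcc_of_mem _ q.2.2]
    rw [h1, h2]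
end
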